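/- Let H₁ and H₂ be finite-dimensional complex inner product spaces, let P₁ be a rank-one orthogonal projection on H₁ and P₂ a rank-one orthogonal projection on H₂, and let S be an operator on H₁ and T an operator on H₂. Then |tr(P₁ ∘ S) − tr(P₂ ∘ T)| ≤ ‖(P₁ ⊗ P₂) ∘ (S ⊗ I_{H₂}) − (I_{H₁} ⊗ T) ∘ (P₁ ⊗ P₂)‖, where ‖·‖ denotes the operator norm on H₁ ⊗ H₂. -/

import Mathlib

/-! A rank-one orthogonal projection is `rankOne e e` for a unit vector `e`, so
`tr(P₁ ∘ S) = ⟪e, S e⟫` and `tr(P₂ ∘ T) = ⟪f, T f⟫`. The unit vector `e ⊗ f` is fixed by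
`P₁ ⊗ P₂`, so `A = (P₁ ⊗ P₂)(S ⊗ I) − (I ⊗ T)(P₁ ⊗ P₂)` has the diagonal matrix coefficient
`⟪e ⊗ f, A (e ⊗ f)⟫ = ⟪e, S e⟫ − ⟪f, T f⟫`, which is bounded by `‖A‖`. -/

section

open scoped InnerProductSpace
open InnerProductSpace ContinuousLinearMap

variable {𝕜 : Type*} [RCLike 𝕜]

section RankOne

variable {E : Type*} [NormedAddCommGroup E] [InnerProductSpace 𝕜 E] [FiniteDimensional 𝕜 E]

theorem Submodule.trace_starProjection (K : Submodule 𝕜 E) :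
    LinearMap.trace 𝕜 E (K.starProjection : E →ₗ[𝕜] E) = Module.finrank 𝕜 K := by
  let b := stdOrthonormalBasis 𝕜 K
  have hb (i) : ‖(b i : E)‖ = 1 := b.norm_eq_one i
  simp [b.starProjection_eq_sum_rankOne, trace_rankOne, inner_self_eq_norm_sq_to_K, hb]

theorem Submodule.exists_starProjection_eq_rankOne_of_finrank_eq_one {K : Submodule 𝕜 E}
    (hK : Module.finrank 𝕜 K = 1) : ∃ e : E, ‖e‖ = 1 ∧ K.starProjection = rankOne 𝕜 e e := by
  let b := (stdOrthonormalBasis 𝕜 K).reindex (finCongr hK)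
  exact ⟨b 0, b.norm_eq_one 0, by simp [b.starProjection_eq_sum_rankOne]⟩

theorem IsStarProjection.exists_eq_rankOne_of_trace_eq_one [CompleteSpace E] {P : E →L[𝕜] E}
    (hP : IsStarProjection P) (htr : LinearMap.trace 𝕜 E (P : E →ₗ[𝕜] E) = 1) :
    ∃ e : E, ‖e‖ = 1 ∧ P = rankOne 𝕜 e e := by
  obtain ⟨K, _, rfl⟩ := isStarProjection_iff_eq_starProjection.mp hP
  refine K.exists_starProjection_eq_rankOne_of_finrank_eq_one ?_
  exact_mod_cast K.trace_starProjection.symm.trans htr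

theorem trace_rankOne_self_comp [CompleteSpace E] (e : E) (S : E →L[𝕜] E) :
    LinearMap.trace 𝕜 E ((rankOne 𝕜 e e ∘L S : E →L[𝕜] E) : E →ₗ[𝕜] E) = ⟪e, S e⟫_𝕜 := by
  rw [rankOne_comp, trace_rankOne, adjoint_inner_left]

end RankOne

theorem ContinuousLinearMap.norm_inner_apply_self_le {E : Type*} [SeminormedAddCommGroup E]
    [InnerProductSpace 𝕜 E] (A : E →L[𝕜] E) (x : E) : ‖⟪x, A x⟫_𝕜‖ ≤ ‖A‖ * ‖x‖ ^ 2 :=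
  calc ‖⟪x, A x⟫_𝕜‖ ≤ ‖x‖ * ‖A x‖ := norm_inner_le_norm x (A x)
    _ ≤ ‖x‖ * (‖A‖ * ‖x‖) := by gcongr; exact A.le_opNorm x
    _ = ‖A‖ * ‖x‖ ^ 2 := by ring

section TensorModel

variable {E F K : Type*} [NormedAddCommGroup E] [InnerProductSpace 𝕜 E]
  [NormedAddCommGroup F] [InnerProductSpace 𝕜 F] [NormedAddCommGroup K] [InnerProductSpace 𝕜 K]
  {tmul : E →ₗ[𝕜] F →ₗ[𝕜] K}

theorem norm_tmul_of_inner_tmul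
    (htmul_inner : ∀ x x' y y', ⟪tmul x y, tmul x' y'⟫_𝕜 = ⟪x, x'⟫_𝕜 * ⟪y, y'⟫_𝕜)
    (x : E) (y : F) : ‖tmul x y‖ = ‖x‖ * ‖y‖ := by
  have hsq : ‖tmul x y‖ ^ 2 = (‖x‖ * ‖y‖) ^ 2 := by
    rw [mul_pow]
    exact_mod_cast (RCLike.ofReal_injective (K := 𝕜)) <| by
      push_cast
      rw [← inner_self_eq_norm_sq_to_K, ← inner_self_eq_norm_sq_to_K,
        ← inner_self_eq_norm_sq_to_K, htmul_inner]
  exact (pow_left_inj₀ (norm_nonneg _) (by positivity) two_ne_zero).mp hsq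

theorem inner_tmul_apply_comp_sub_comp
    (htmul_inner : ∀ x x' y y', ⟪tmul x y, tmul x' y'⟫_𝕜 = ⟪x, x'⟫_𝕜 * ⟪y, y'⟫_𝕜)
    {e : E} {f : F} (he : ‖e‖ = 1) (hf : ‖f‖ = 1) {S : E →L[𝕜] E} {T : F →L[𝕜] F}
    {PP SI IT : K →L[𝕜] K}
    (hPP : ∀ x y, PP (tmul x y) = tmul (rankOne 𝕜 e e x) (rankOne 𝕜 f f y))
    (hSI : ∀ x y, SI (tmul x y) = tmul (S x) y) (hIT : ∀ x y, IT (tmul x y) = tmul x (T y)) :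
    ⟪tmul e f, (PP ∘L SI - IT ∘L PP) (tmul e f)⟫_𝕜 = ⟪e, S e⟫_𝕜 - ⟪f, T f⟫_𝕜 := by
  have hee : ⟪e, e⟫_𝕜 = 1 := by simp [inner_self_eq_norm_sq_to_K, he]
  have hff : ⟪f, f⟫_𝕜 = 1 := by simp [inner_self_eq_norm_sq_to_K, hf]
  have happly : (PP ∘L SI - IT ∘L PP) (tmul e f) = ⟪e, S e⟫_𝕜 • tmul e f - tmul e (T f) := by
    simp [hSI, hPP, hIT, he, hf]
  rw [happly, inner_sub_right, inner_smul_right, htmul_inner, htmul_inner, hee, hff]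
  ring

end TensorModel

end

open scoped ComplexInnerProductSpace

/-- The Hilbert space tensor product `H₁ ⊗ H₂` is modelled by `K` with a bilinear `tmul` whose
inner products multiply; `PP`, `SI`, `IT` stand for `P₁ ⊗ P₂`, `S ⊗ I`, `I ⊗ T` through their
values on elementary tensors. -/
theorem stmt6_general {H₁ H₂ K : Type*}
    [NormedAddCommGroup H₁] [InnerProductSpace ℂ H₁] [FiniteDimensional ℂ H₁]
    [NormedAddCommGroup H₂] [InnerProductSpace ℂ H₂] [FiniteDimensional ℂ H₂]
    [NormedAddCommGroup K] [InnerProductSpace ℂ K]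
    (tmul : H₁ →ₗ[ℂ] H₂ →ₗ[ℂ] K)
    (htmul_inner : ∀ (x x' : H₁) (y y' : H₂),
      ⟪tmul x y, tmul x' y'⟫ = ⟪x, x'⟫ * ⟪y, y'⟫)
    (P₁ S : H₁ →L[ℂ] H₁) (P₂ T : H₂ →L[ℂ] H₂)
    (hP₁sa : IsSelfAdjoint P₁) (hP₁idem : P₁ ∘L P₁ = P₁)
    (hP₁tr : LinearMap.trace ℂ H₁ (P₁ : H₁ →ₗ[ℂ] H₁) = 1)
    (hP₂sa : IsSelfAdjoint P₂) (hP₂idem : P₂ ∘L P₂ = P₂)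
    (hP₂tr : LinearMap.trace ℂ H₂ (P₂ : H₂ →ₗ[ℂ] H₂) = 1)
    (PP SI IT : K →L[ℂ] K)
    (hPP : ∀ x y, PP (tmul x y) = tmul (P₁ x) (P₂ y))
    (hSI : ∀ x y, SI (tmul x y) = tmul (S x) y)
    (hIT : ∀ x y, IT (tmul x y) = tmul x (T y)) :
    ‖LinearMap.trace ℂ H₁ ((P₁ ∘L S : H₁ →L[ℂ] H₁) : H₁ →ₗ[ℂ] H₁)
      - LinearMap.trace ℂ H₂ ((P₂ ∘L T : H₂ →L[ℂ] H₂) : H₂ →ₗ[ℂ] H₂)‖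
      ≤ ‖PP ∘L SI - IT ∘L PP‖ := by
  obtain ⟨e, he, rfl⟩ :=
    IsStarProjection.exists_eq_rankOne_of_trace_eq_one ⟨hP₁idem, hP₁sa⟩ hP₁tr
  obtain ⟨f, hf, rfl⟩ :=
    IsStarProjection.exists_eq_rankOne_of_trace_eq_one ⟨hP₂idem, hP₂sa⟩ hP₂tr
  have hu : ‖tmul e f‖ = 1 := by rw [norm_tmul_of_inner_tmul htmul_inner, he, hf, one_mul]
  calc _ = ‖⟪tmul e f, (PP ∘L SI - IT ∘L PP) (tmul e f)⟫‖ := by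
        rw [trace_rankOne_self_comp, trace_rankOne_self_comp,
          inner_tmul_apply_comp_sub_comp htmul_inner he hf hPP hSI hIT]
    _ ≤ ‖PP ∘L SI - IT ∘L PP‖ * ‖tmul e f‖ ^ 2 :=
        (PP ∘L SI - IT ∘L PP).norm_inner_apply_self_le _
    _ = ‖PP ∘L SI - IT ∘L PP‖ := by rw [hu, one_pow, mul_one]

/-- Let `H₁, H₂` be finite-dimensional complex inner product spaces,
`P₁, P₂` rank-one orthogonal projections (self-adjoint idempotents of trace 1) on
`H₁, H₂`, and `S, T` operators on `H₁, H₂`.  Then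
`|tr(P₁∘S) − tr(P₂∘T)| ≤ ‖(P₁⊗P₂)∘(S⊗I) − (I⊗T)∘(P₁⊗P₂)‖`
(operator norm on `H₁ ⊗ H₂`).

Since Mathlib has no inner-product-space instance on `TensorProduct`, the Hilbert
space tensor product `H₁ ⊗ H₂` is encoded as a finite-dimensional inner product
space `K` together with a bilinear map `tmul` whose image spans `K` and whose
inner products multiply (`⟪x⊗y, x'⊗y'⟫ = ⟪x,x'⟫·⟪y,y'⟫`); the operators
`P₁ ⊗ P₂`, `S ⊗ I` and `I ⊗ T` are the (unique) operators `PP`, `SI`, `IT` on `K`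
determined by their values on elementary tensors. -/
theorem stmt6 {H₁ H₂ K : Type*}
    [NormedAddCommGroup H₁] [InnerProductSpace ℂ H₁] [FiniteDimensional ℂ H₁]
    [NormedAddCommGroup H₂] [InnerProductSpace ℂ H₂] [FiniteDimensional ℂ H₂]
    [NormedAddCommGroup K] [InnerProductSpace ℂ K] [FiniteDimensional ℂ K]
    (tmul : H₁ →ₗ[ℂ] H₂ →ₗ[ℂ] K)
    (htmul_inner : ∀ (x x' : H₁) (y y' : H₂),
      ⟪tmul x y, tmul x' y'⟫ = ⟪x, x'⟫ * ⟪y, y'⟫)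
    (htmul_span : Submodule.span ℂ {z : K | ∃ x y, tmul x y = z} = ⊤)
    (P₁ S : H₁ →L[ℂ] H₁) (P₂ T : H₂ →L[ℂ] H₂)
    (hP₁sa : IsSelfAdjoint P₁) (hP₁idem : P₁ ∘L P₁ = P₁)
    (hP₁tr : LinearMap.trace ℂ H₁ (P₁ : H₁ →ₗ[ℂ] H₁) = 1)
    (hP₂sa : IsSelfAdjoint P₂) (hP₂idem : P₂ ∘L P₂ = P₂)
    (hP₂tr : LinearMap.trace ℂ H₂ (P₂ : H₂ →ₗ[ℂ] H₂) = 1)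
    (PP SI IT : K →L[ℂ] K)
    (hPP : ∀ x y, PP (tmul x y) = tmul (P₁ x) (P₂ y))
    (hSI : ∀ x y, SI (tmul x y) = tmul (S x) y)
    (hIT : ∀ x y, IT (tmul x y) = tmul x (T y)) :
    ‖LinearMap.trace ℂ H₁ ((P₁ ∘L S : H₁ →L[ℂ] H₁) : H₁ →ₗ[ℂ] H₁)
      - LinearMap.trace ℂ H₂ ((P₂ ∘L T : H₂ →L[ℂ] H₂) : H₂ →ₗ[ℂ] H₂)‖
      ≤ ‖PP ∘L SI - IT ∘L PP‖ :=
  stmt6_general tmul htmul_inner P₁ S P₂ T hP₁sa hP₁idem hP₁tr hP₂sa hP₂idem hP₂tr PP SI IT hPP hSI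
    hIT
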